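/- Consider the regularized unconstrained features objective L(W,H) = (1/2N)‖WH − Y‖_F² + (λ/2)(‖W‖_F² + ‖H‖_F²) with Y ∈ R^{t×N} nonzero and λ > 0. If λ ≥ σ_max(Y)/N (the weight decay exceeds the top singular value of the scaled target), then (W,H) = (0,0) is a global minimizer of L. -/

import Mathlib

open Matrix
open scoped Matrix.Norms.L2Operator

/-- Frobenius norm of a real matrix. -/
noncomputable def fro {m n : Type*} [Fintype m] [Fintype n] (A : Matrix m n ℝ) : ℝ :=
  Real.sqrt (∑ i, ∑ j, (A i j) ^ 2)

/-- The regularized unconstrained features objective. -/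
noncomputable def ufmLoss {t h N : ℕ} (lam : ℝ) (Y : Matrix (Fin t) (Fin N) ℝ)
    (W : Matrix (Fin t) (Fin h) ℝ) (H : Matrix (Fin h) (Fin N) ℝ) : ℝ :=
  (1 / (2 * (N : ℝ))) * fro (W * H - Y) ^ 2 + (lam / 2) * (fro W ^ 2 + fro H ^ 2)

lemma fro_sq {m n : Type*} [Fintype m] [Fintype n] (A : Matrix m n ℝ) :
    fro A ^ 2 = ∑ i, ∑ j, (A i j) ^ 2 := by
  apply Real.sq_sqrt
  positivity

/-- Key bound: ⟨WH, Y⟩ ≤ ‖Y‖_op √(∑ W²) √(∑ H²). -/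
lemma inner_prod_bound {t h N : ℕ} (Y : Matrix (Fin t) (Fin N) ℝ)
    (W : Matrix (Fin t) (Fin h) ℝ) (H : Matrix (Fin h) (Fin N) ℝ) :
    ∑ i, ∑ j, (W * H) i j * Y i j ≤
      ‖Y‖ * Real.sqrt (∑ i, ∑ k, (W i k) ^ 2) * Real.sqrt (∑ k, ∑ j, (H k j) ^ 2) := by
  set M : Matrix (Fin h) (Fin N) ℝ := fun k j => ∑ i, W i k * Y i j with hM
  have hP : ∑ i, ∑ j, (W * H) i j * Y i j = ∑ p : Fin h × Fin N, M p.1 p.2 * H p.1 p.2 := by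
    rw [Fintype.sum_prod_type]
    calc ∑ i, ∑ j, (W * H) i j * Y i j
        = ∑ i, ∑ k, ∑ j, W i k * H k j * Y i j := by
          refine Finset.sum_congr rfl fun i _ => ?_
          rw [← Finset.sum_comm]
          refine Finset.sum_congr rfl fun j _ => ?_
          rw [Matrix.mul_apply, Finset.sum_mul]
      _ = ∑ k, ∑ i, ∑ j, W i k * H k j * Y i j := Finset.sum_comm
      _ = ∑ k, ∑ j, M k j * H k j := by
          refine Finset.sum_congr rfl fun k _ => ?_
          rw [← Finset.sum_comm]
          refine Finset.sum_congr rfl fun j _ => ?_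
          rw [hM]
          simp only [Finset.sum_mul]
          exact Finset.sum_congr rfl fun i _ => by ring
  have hSM : ∑ p : Fin h × Fin N, (M p.1 p.2) ^ 2 ≤
      ‖Y‖ ^ 2 * ∑ i, ∑ k, (W i k) ^ 2 := by
    have hT : ‖Yᵀ‖ = ‖Y‖ := by
      have hc : Yᵀ = Yᴴ := by ext i j; simp [Matrix.conjTranspose_apply]
      rw [hc, Matrix.l2_opNorm_conjTranspose]
    have key : ∀ k : Fin h, ∑ j, (M k j) ^ 2 ≤ ‖Y‖ ^ 2 * ∑ i, (W i k) ^ 2 := by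
      intro k
      set x : EuclideanSpace ℝ (Fin t) := WithLp.toLp 2 (fun i => W i k) with hx
      have hmv := Matrix.l2_opNorm_mulVec Yᵀ x
      have hL : ‖(EuclideanSpace.equiv (Fin N) ℝ).symm (Yᵀ *ᵥ x)‖ ^ 2 = ∑ j, (M k j) ^ 2 := by
        rw [EuclideanSpace.norm_eq, Real.sq_sqrt (by positivity)]
        refine Finset.sum_congr rfl fun j _ => ?_
        rw [Real.norm_eq_abs, sq_abs]
        congr 1
        show (Yᵀ *ᵥ x) j = M k j
        rw [hM]
        simp only [Matrix.mulVec, Matrix.transpose_apply, dotProduct, hx]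
        exact Finset.sum_congr rfl fun i _ => mul_comm _ _
      have hR : ‖x‖ ^ 2 = ∑ i, (W i k) ^ 2 := by
        rw [EuclideanSpace.norm_eq, Real.sq_sqrt (by positivity)]
        refine Finset.sum_congr rfl fun i _ => ?_
        rw [Real.norm_eq_abs, sq_abs]
      calc ∑ j, (M k j) ^ 2 = ‖(EuclideanSpace.equiv (Fin N) ℝ).symm (Yᵀ *ᵥ x)‖ ^ 2 := hL.symm
        _ ≤ (‖Yᵀ‖ * ‖x‖) ^ 2 := by
            apply pow_le_pow_left₀ (norm_nonneg _) hmv _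
        _ = ‖Y‖ ^ 2 * ∑ i, (W i k) ^ 2 := by rw [mul_pow, hT, hR]
    calc ∑ p : Fin h × Fin N, (M p.1 p.2) ^ 2 = ∑ k, ∑ j, (M k j) ^ 2 := by
          rw [Fintype.sum_prod_type]
      _ ≤ ∑ k, ‖Y‖ ^ 2 * ∑ i, (W i k) ^ 2 := Finset.sum_le_sum (fun k _ => key k)
      _ = ‖Y‖ ^ 2 * ∑ k, ∑ i, (W i k) ^ 2 := by rw [Finset.mul_sum]
      _ = ‖Y‖ ^ 2 * ∑ i, ∑ k, (W i k) ^ 2 := by rw [Finset.sum_comm]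
  have hSH : ∑ p : Fin h × Fin N, (H p.1 p.2) ^ 2 = ∑ k, ∑ j, (H k j) ^ 2 :=
    Fintype.sum_prod_type _
  rw [hP]
  have cs := Finset.sum_mul_sq_le_sq_mul_sq Finset.univ
    (fun p : Fin h × Fin N => M p.1 p.2) (fun p : Fin h × Fin N => H p.1 p.2)
  have habs : ∑ p : Fin h × Fin N, M p.1 p.2 * H p.1 p.2 ≤
      Real.sqrt ((∑ p : Fin h × Fin N, (M p.1 p.2) ^ 2) *
        (∑ p : Fin h × Fin N, (H p.1 p.2) ^ 2)) := by
    calc ∑ p : Fin h × Fin N, M p.1 p.2 * H p.1 p.2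
        ≤ |∑ p : Fin h × Fin N, M p.1 p.2 * H p.1 p.2| := le_abs_self _
      _ = Real.sqrt ((∑ p : Fin h × Fin N, M p.1 p.2 * H p.1 p.2) ^ 2) :=
          (Real.sqrt_sq_eq_abs _).symm
      _ ≤ _ := Real.sqrt_le_sqrt cs
  calc ∑ p : Fin h × Fin N, M p.1 p.2 * H p.1 p.2
      ≤ Real.sqrt ((∑ p : Fin h × Fin N, (M p.1 p.2) ^ 2) *
        (∑ p : Fin h × Fin N, (H p.1 p.2) ^ 2)) := habs
    _ ≤ Real.sqrt ((‖Y‖ ^ 2 * ∑ i, ∑ k, (W i k) ^ 2) * (∑ k, ∑ j, (H k j) ^ 2)) := by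
        apply Real.sqrt_le_sqrt
        rw [hSH]
        apply mul_le_mul_of_nonneg_right hSM (by positivity)
    _ = ‖Y‖ * Real.sqrt (∑ i, ∑ k, (W i k) ^ 2) * Real.sqrt (∑ k, ∑ j, (H k j) ^ 2) := by
        rw [Real.sqrt_mul (by positivity), Real.sqrt_mul (by positivity),
          Real.sqrt_sq (norm_nonneg _), mul_assoc]

/-- If the weight decay exceeds σ_max(Y)/N, then (0, 0) is a global minimizer of the
regularized unconstrained features objective. -/
theorem excessive_weight_decay_collapse {t h N : ℕ} (hN : 0 < N)
    (Y : Matrix (Fin t) (Fin N) ℝ) (hY : Y ≠ 0)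
    (lam : ℝ) (hlam : 0 < lam) (hbig : ‖Y‖ / (N : ℝ) ≤ lam) :
    ∀ (W : Matrix (Fin t) (Fin h) ℝ) (H : Matrix (Fin h) (Fin N) ℝ),
      ufmLoss lam Y (0 : Matrix (Fin t) (Fin h) ℝ) (0 : Matrix (Fin h) (Fin N) ℝ) ≤ ufmLoss lam Y W H := by
  intro W H
  have hNpos : (0 : ℝ) < N := by exact_mod_cast hN
  unfold ufmLoss
  rw [fro_sq, fro_sq, fro_sq, fro_sq, fro_sq, fro_sq]
  have hSWnn : (0:ℝ) ≤ ∑ i, ∑ k, (W i k) ^ 2 := by positivity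
  have hSHnn : (0:ℝ) ≤ ∑ k, ∑ j, (H k j) ^ 2 := by positivity
  have hSWHnn : (0:ℝ) ≤ ∑ i, ∑ j, ((W * H) i j) ^ 2 := by positivity
  set SW := ∑ i, ∑ k, (W i k) ^ 2 with hSW
  set SH := ∑ k, ∑ j, (H k j) ^ 2 with hSH
  set SY := ∑ i, ∑ j, (Y i j) ^ 2 with hSY
  set SWH := ∑ i, ∑ j, ((W * H) i j) ^ 2 with hSWH
  set P := ∑ i, ∑ j, (W * H) i j * Y i j with hP
  have hzero : ∑ i, ∑ j, (((0 : Matrix (Fin t) (Fin h) ℝ) * (0 : Matrix (Fin h) (Fin N) ℝ) - Y) i j) ^ 2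
      = SY := by
    apply Finset.sum_congr rfl; intro i _
    apply Finset.sum_congr rfl; intro j _
    simp [Matrix.sub_apply]
  have hz2 : ∑ i, ∑ j, (((0 : Matrix (Fin t) (Fin h) ℝ)) i j) ^ 2 = 0 := by simp
  have hz3 : ∑ k, ∑ j, (((0 : Matrix (Fin h) (Fin N) ℝ)) k j) ^ 2 = 0 := by simp
  rw [hzero, hz2, hz3]
  have hexp : ∑ i, ∑ j, ((W * H - Y) i j) ^ 2 = SWH - 2 * P + SY := by
    have e : ∀ i j, ((W * H - Y) i j) ^ 2
        = ((W * H) i j) ^ 2 - 2 * ((W * H) i j * Y i j) + (Y i j) ^ 2 := by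
      intro i j; simp [Matrix.sub_apply]; ring
    simp_rw [e]
    rw [hSWH, hP, hSY]
    simp [Finset.sum_add_distrib, Finset.sum_sub_distrib, Finset.mul_sum]
  rw [hexp]
  have hkey : P ≤ ‖Y‖ * Real.sqrt SW * Real.sqrt SH := inner_prod_bound Y W H
  have hamgm : Real.sqrt SW * Real.sqrt SH ≤ (SW + SH) / 2 := by
    nlinarith [Real.sq_sqrt hSWnn, Real.sq_sqrt hSHnn,
      sq_nonneg (Real.sqrt SW - Real.sqrt SH)]
  have hYnn : (0 : ℝ) ≤ ‖Y‖ := norm_nonneg _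
  have hYlam : ‖Y‖ ≤ lam * N := by
    rw [div_le_iff₀ hNpos] at hbig; linarith
  have hPb : P ≤ lam * N * (SW + SH) / 2 := by
    calc P ≤ ‖Y‖ * Real.sqrt SW * Real.sqrt SH := hkey
      _ ≤ ‖Y‖ * ((SW + SH) / 2) := by
          rw [mul_assoc]
          exact mul_le_mul_of_nonneg_left hamgm hYnn
      _ ≤ lam * N * ((SW + SH) / 2) := by
          apply mul_le_mul_of_nonneg_right hYlam (by linarith)
      _ = lam * N * (SW + SH) / 2 := by ring
  set c : ℝ := 1 / (2 * (N : ℝ)) with hc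
  have hcpos : 0 < c := by rw [hc]; positivity
  have c1 : c * (2 * P) ≤ lam / 2 * (SW + SH) := by
    have e : c * (2 * P) = P / N := by rw [hc]; field_simp
    rw [e, div_le_iff₀ hNpos]
    calc P ≤ lam * N * (SW + SH) / 2 := hPb
      _ = lam / 2 * (SW + SH) * N := by ring
  have c2 : 0 ≤ c * SWH := mul_nonneg hcpos.le hSWHnn
  nlinarith [c1, c2]
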